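/- arXiv:2310.05612 — 5 statements merged into one kernel-verified Lean document; each statement's English description precedes it below -/
import Mathlib

section
/- Let T ⊆ ℝ^m be compact, T_N ⊆ T finite, δ_N > 0, L > 0. Let μ ∈ ℝ^m, Σ a real symmetric m×m matrix, ε_μ ∈ ℝ, Y₁ a PSD real symmetric (m+1)×(m+1) matrix, Y₂ a PSD real symmetric m×m matrix, and define q(t) := −⟨B(t), Y₁⟩_F + ⟨(t−μ)(t−μ)ᵀ, Y₂⟩_F; assume q is L-Lipschitz on T with respect to the Euclidean norm. Let I and [k] be finite index sets, x ∈ ℝ^k, y ∈ ℝ^I with yᵢ ≥ 0, εᵢ ∈ ℝ \ {0}, and let Xᵢ ⊆ T (i ∈ [k]) and Tᵢ ⊆ T (i ∈ I) be subsets with continuous approximators 1^c_{Xᵢ}, 1^c_{Tᵢ} : T → ℝ satisfying xᵢ·1^c_{Xᵢ}(t) ≥ xᵢ·1_{Xᵢ}(t) and sign(εᵢ)·1^c_{Tᵢ}(t) ≤ sign(εᵢ)·1_{Tᵢ}(t) for all t ∈ T. Assume that for every t ∈ T there exists t̄ ∈ T_N with ‖t − t̄‖₂ ≤ δ_N·√m,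 1_{Xᵢ}(t̄) = 1_{Xᵢ}(t) for all i ∈ [k], and 1_{Tᵢ}(t̄) = 1_{Tᵢ}(t) for all i ∈ I. If for every t̄ ∈ T_N one has Σ_{i∈[k]} xᵢ·1_{Xᵢ}(t̄) + q(t̄) − Σ_{i∈I} sign(εᵢ)·1_{Tᵢ}(t̄)·yᵢ − L·δ_N·√m ≥ 0, then for every t ∈ T one has Σ_{i∈[k]} xᵢ·1^c_{Xᵢ}(t) + q(t) − Σ_{i∈I} sign(εᵢ)·1^c_{Tᵢ}(t)·yᵢ ≥ 0. -/
open Matrix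

/-- The symmetric block matrix `B(t) = [[Σ, v],[vᵀ, ε]]` of size `(m+1) × (m+1)`,
where `v = t - μ`. -/
def Bmat (m : ℕ) (S : Matrix (Fin m) (Fin m) ℝ) (v : Fin m → ℝ) (e : ℝ) :
    Matrix (Fin (m + 1)) (Fin (m + 1)) ℝ :=
  Matrix.of fun i j =>
    if hi : (i : ℕ) < m then
      if hj : (j : ℕ) < m then S ⟨i, hi⟩ ⟨j, hj⟩ else v ⟨i, hi⟩
    else if hj : (j : ℕ) < m then v ⟨j, hj⟩ else e

/-- feasible solutions of the discretized SDP (with safety margin `L·δ_N·√m`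
at each grid point) satisfy the semiinfinite dual constraint of the DRO problem. -/
theorem discretized_SDP_implies_semiinfinite_dual_constraint
    {m k : ℕ} {ι : Type} [Fintype ι]
    (T : Set (EuclideanSpace ℝ (Fin m))) (hT : IsCompact T)
    (TN : Set (EuclideanSpace ℝ (Fin m))) (hTNfin : TN.Finite) (hTNsub : TN ⊆ T)
    (δN L : ℝ) (hδ : 0 < δN) (hL : 0 < L)
    (μ : Fin m → ℝ) (Sig : Matrix (Fin m) (Fin m) ℝ) (hSig : Sig.IsSymm) (εμ : ℝ)
    (Y₁ : Matrix (Fin (m + 1)) (Fin (m + 1)) ℝ) (hY₁ : Y₁.PosSemidef)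
    (Y₂ : Matrix (Fin m) (Fin m) ℝ) (hY₂ : Y₂.PosSemidef)
    (q : EuclideanSpace ℝ (Fin m) → ℝ)
    (hqdef : ∀ t, q t =
      -((Bmat m Sig (fun l => t l - μ l) εμ)ᵀ * Y₁).trace
        + ((Matrix.vecMulVec (fun l => t l - μ l) (fun l => t l - μ l))ᵀ * Y₂).trace)
    (hqLip : ∀ t ∈ T, ∀ t' ∈ T, |q t - q t'| ≤ L * ‖t - t'‖)
    (x : Fin k → ℝ) (y : ι → ℝ) (hy : ∀ i, 0 ≤ y i)
    (ε : ι → ℝ) (hε : ∀ i, ε i ≠ 0)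
    (X : Fin k → Set (EuclideanSpace ℝ (Fin m))) (hX : ∀ i, X i ⊆ T)
    (Tc : ι → Set (EuclideanSpace ℝ (Fin m))) (hTc : ∀ i, Tc i ⊆ T)
    (indXc : Fin k → EuclideanSpace ℝ (Fin m) → ℝ)
    (hindXc_cont : ∀ i, ContinuousOn (indXc i) T)
    (indTc : ι → EuclideanSpace ℝ (Fin m) → ℝ)
    (hindTc_cont : ∀ i, ContinuousOn (indTc i) T)
    (hXapprox : ∀ i, ∀ t ∈ T,
      x i * indXc i t ≥ x i * Set.indicator (X i) (fun _ => (1 : ℝ)) t)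
    (hTapprox : ∀ i, ∀ t ∈ T,
      Real.sign (ε i) * indTc i t ≤ Real.sign (ε i) * Set.indicator (Tc i) (fun _ => (1 : ℝ)) t)
    (hnear : ∀ t ∈ T, ∃ t' ∈ TN, ‖t - t'‖ ≤ δN * Real.sqrt m ∧
      (∀ i, Set.indicator (X i) (fun _ => (1 : ℝ)) t' = Set.indicator (X i) (fun _ => (1 : ℝ)) t) ∧
      (∀ i, Set.indicator (Tc i) (fun _ => (1 : ℝ)) t' = Set.indicator (Tc i) (fun _ => (1 : ℝ)) t))
    (hdisc : ∀ t' ∈ TN,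
      ∑ i, x i * Set.indicator (X i) (fun _ => (1 : ℝ)) t' + q t'
        - ∑ i, Real.sign (ε i) * Set.indicator (Tc i) (fun _ => (1 : ℝ)) t' * y i
        - L * δN * Real.sqrt m ≥ 0) :
    ∀ t ∈ T,
      ∑ i, x i * indXc i t + q t - ∑ i, Real.sign (ε i) * indTc i t * y i ≥ 0 := by
  intro t ht
  obtain ⟨t', ht'TN, hdist, hXeq, hTeq⟩ := hnear t ht
  have ht'T : t' ∈ T := hTNsub ht'TN
  have hd := hdisc t' ht'TN
  have h1 : ∑ i, x i * Set.indicator (X i) (fun _ => (1 : ℝ)) t'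
      ≤ ∑ i, x i * indXc i t := by
    apply Finset.sum_le_sum
    intro i _
    rw [hXeq i]
    exact hXapprox i t ht
  have h2 : ∑ i, Real.sign (ε i) * indTc i t * y i
      ≤ ∑ i, Real.sign (ε i) * Set.indicator (Tc i) (fun _ => (1 : ℝ)) t' * y i := by
    apply Finset.sum_le_sum
    intro i _
    rw [hTeq i]
    exact mul_le_mul_of_nonneg_right (hTapprox i t ht) (hy i)
  have h3 : q t' - q t ≤ L * δN * Real.sqrt m := by
    calc q t' - q t ≤ |q t' - q t| := le_abs_self _
      _ ≤ L * ‖t' - t‖ := hqLip t' ht'T t ht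
      _ ≤ L * (δN * Real.sqrt m) := by
          apply mul_le_mul_of_nonneg_left _ hL.le
          rw [norm_sub_rev]; exact hdist
      _ = L * δN * Real.sqrt m := (mul_assoc _ _ _).symm
  linarith
end

section
/- Let δ > 0, N a positive integer, M := N·δ, and let G := {l·δ : l = 0, 1, …, N} be the uniform grid in [0,M]. Let b̃ : G → {0,1} (extended by b̃(t) := 0 for t ∉ G), Δ⁻, Δ⁺ : G → {0,1}, and x⁻, x⁺ ∈ ℝ satisfy: (i) b̃(t+δ) − b̃(t) = Δ⁻(t) − Δ⁺(t) for every t ∈ G; (ii) Σ_{t∈G} (Δ⁻(t) + Δ⁺(t)) ≤ 2; (iii) x⁻ ≥ Σ_{t∈G} (t+δ)·Δ⁻(t); (iv) x⁺ ≤ M − Σ_{t∈G} (M−t)·Δ⁺(t); (v) x⁺ − x⁻ ≥ M·Σ_{t∈G} Δ⁺(t) − Σ_{t∈G} ((M−t)·Δ⁺(t) + (t+δ)·Δ⁻(t)); (vi) 0 ≤ x⁺ − x⁻ ≤ δ·(Σ_{t∈G} b̃(t) − 1). Then for every t ∈ G one has b̃(t) = 1 if and only if x⁻ ≤ t ≤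 x⁺. -/
private lemma aux_support {s : Finset ℕ} {f : ℕ → ℝ} (hf : ∀ i ∈ s, f i = 0 ∨ f i = 1)
    (hs : ∑ i ∈ s, f i < 2) {k : ℕ} (hk : k ∈ s) (hfk : f k = 1) :
    ∀ i ∈ s, i ≠ k → f i = 0 := by
  intro i hi hik
  rcases hf i hi with h | h
  · exact h
  · exfalso
    have hsub : ({i, k} : Finset ℕ) ⊆ s := by
      intro x hx
      rcases Finset.mem_insert.1 hx with rfl | hx
      · exact hi
      · rw [Finset.mem_singleton.1 hx]; exact hk
    have h2 : ∑ x ∈ ({i, k} : Finset ℕ), f x ≤ ∑ x ∈ s, f x :=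
      Finset.sum_le_sum_of_subset_of_nonneg hsub (by
        intro x hx _
        rcases hf x hx with h' | h' <;> simp [h'])
    rw [Finset.sum_pair hik, h, hfk] at h2
    linarith

private lemma aux_exists {s : Finset ℕ} {f : ℕ → ℝ} (hf : ∀ i ∈ s, f i = 0 ∨ f i = 1)
    (hs : ∑ i ∈ s, f i ≠ 0) : ∃ k ∈ s, f k = 1 := by
  by_contra h
  push_neg at h
  apply hs
  apply Finset.sum_eq_zero
  intro i hi
  rcases hf i hi with h' | h'
  · exact h'
  · exact absurd h' (h i hi)

/-- the binary variables of the mixed-integer SDP correctly encode the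
indicator function of a decision-dependent interval `[x⁻, x⁺]` on the uniform grid
`G = {0, δ, 2δ, …, Nδ}`: under the jump constraints (i)–(vi), `b̃ t = 1` iff
`x⁻ ≤ t ≤ x⁺`, for every grid point `t ∈ G`. -/
theorem binary_variables_encode_box_indicator
    (δ : ℝ) (hδ : 0 < δ) (N : ℕ) (hN : 0 < N) (M : ℝ) (hM : M = N * δ)
    (G : Finset ℝ) (hG : G = (Finset.range (N + 1)).image (fun l : ℕ => (l : ℝ) * δ))
    (btil Δm Δp : ℝ → ℝ)
    (hb_bin : ∀ t ∈ G, btil t = 0 ∨ btil t = 1)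
    (hb_out : ∀ t ∉ G, btil t = 0)
    (hΔm_bin : ∀ t ∈ G, Δm t = 0 ∨ Δm t = 1)
    (hΔp_bin : ∀ t ∈ G, Δp t = 0 ∨ Δp t = 1)
    (xm xp : ℝ)
    (h_i : ∀ t ∈ G, btil (t + δ) - btil t = Δm t - Δp t)
    (h_ii : ∑ t ∈ G, (Δm t + Δp t) ≤ 2)
    (h_iii : xm ≥ ∑ t ∈ G, (t + δ) * Δm t)
    (h_iv : xp ≤ M - ∑ t ∈ G, (M - t) * Δp t)
    (h_v : xp - xm ≥ M * ∑ t ∈ G, Δp t - ∑ t ∈ G, ((M - t) * Δp t + (t + δ) * Δm t))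
    (h_vi : 0 ≤ xp - xm ∧ xp - xm ≤ δ * (∑ t ∈ G, btil t - 1)) :
    ∀ t ∈ G, (btil t = 1 ↔ xm ≤ t ∧ t ≤ xp) := by
  obtain ⟨hvi0, hvi1⟩ := h_vi
  subst hM
  have hδ' : δ ≠ 0 := ne_of_gt hδ
  have hginj : ∀ a b : ℕ, (a : ℝ) * δ = (b : ℝ) * δ → a = b := by
    intro a b h
    exact_mod_cast mul_right_cancel₀ hδ' h
  have hsum : ∀ f : ℝ → ℝ, ∑ t ∈ G, f t = ∑ l ∈ Finset.range (N + 1), f ((l : ℝ) * δ) := by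
    intro f
    rw [hG]
    exact Finset.sum_image (fun a _ b _ h => hginj a b h)
  have hmemG : ∀ l : ℕ, l ≤ N → ((l : ℝ) * δ) ∈ G := by
    intro l hl
    rw [hG]
    exact Finset.mem_image_of_mem _ (Finset.mem_range.2 (Nat.lt_succ_of_le hl))
  have hmemG' : ∀ t ∈ G, ∃ l : ℕ, l ≤ N ∧ t = (l : ℝ) * δ := by
    intro t ht
    rw [hG] at ht
    obtain ⟨l, hl, rfl⟩ := Finset.mem_image.1 ht
    exact ⟨l, Nat.lt_succ_iff.1 (Finset.mem_range.1 hl), rfl⟩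
  -- binary hypotheses in sequence form
  have hb' : ∀ i ∈ Finset.range (N + 1), btil ((i : ℝ) * δ) = 0 ∨ btil ((i : ℝ) * δ) = 1 :=
    fun i hi => hb_bin _ (hmemG i (Nat.lt_succ_iff.1 (Finset.mem_range.1 hi)))
  have hm' : ∀ i ∈ Finset.range (N + 1), Δm ((i : ℝ) * δ) = 0 ∨ Δm ((i : ℝ) * δ) = 1 :=
    fun i hi => hΔm_bin _ (hmemG i (Nat.lt_succ_iff.1 (Finset.mem_range.1 hi)))
  have hp' : ∀ i ∈ Finset.range (N + 1), Δp ((i : ℝ) * δ) = 0 ∨ Δp ((i : ℝ) * δ) = 1 :=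
    fun i hi => hΔp_bin _ (hmemG i (Nat.lt_succ_iff.1 (Finset.mem_range.1 hi)))
  -- value just beyond the grid
  have hbN1 : btil (((N + 1 : ℕ) : ℝ) * δ) = 0 := by
    apply hb_out
    intro hmem
    obtain ⟨l, hl, hle⟩ := hmemG' _ hmem
    have := hginj _ _ hle
    omega
  -- the jump equation in sequence form
  have hstep : ∀ l : ℕ, l ≤ N →
      btil (((l + 1 : ℕ) : ℝ) * δ) - btil ((l : ℝ) * δ) = Δm ((l : ℝ) * δ) - Δp ((l : ℝ) * δ) := by
    intro l hl
    have h := h_i ((l : ℝ) * δ) (hmemG l hl)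
    have heq : (l : ℝ) * δ + δ = ((l + 1 : ℕ) : ℝ) * δ := by push_cast; ring
    rw [heq] at h
    exact h
  -- partial-sum formula
  have hformula : ∀ l : ℕ, l ≤ N + 1 →
      btil ((l : ℝ) * δ) = btil (((0 : ℕ) : ℝ) * δ) +
        ∑ i ∈ Finset.range l, (Δm ((i : ℝ) * δ) - Δp ((i : ℝ) * δ)) := by
    intro l hl
    induction l with
    | zero => simp
    | succ n ih =>
      have hn : n ≤ N := by omega
      rw [Finset.sum_range_succ]
      have h1 := hstep n hn
      have h2 := ih (by omega)
      linarith
  -- rewrite all grid sums as sums over range (N+1)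
  simp only [hsum] at h_ii h_iii h_iv h_v hvi1
  -- there is a grid point where btil = 1
  have hS1 : (1 : ℝ) ≤ ∑ l ∈ Finset.range (N + 1), btil ((l : ℝ) * δ) := by
    by_contra h
    push_neg at h
    have : δ * (∑ l ∈ Finset.range (N + 1), btil ((l : ℝ) * δ) - 1) < 0 :=
      mul_neg_of_pos_of_neg hδ (by linarith)
    linarith
  obtain ⟨l0, hl0mem, hbl0⟩ := aux_exists hb' (by linarith)
  -- k : last grid index with btil = 1
  have hT : ((Finset.range (N + 1)).filter (fun l : ℕ => btil ((l : ℝ) * δ) = 1)).Nonempty :=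
    ⟨l0, Finset.mem_filter.2 ⟨hl0mem, hbl0⟩⟩
  set k := ((Finset.range (N + 1)).filter (fun l : ℕ => btil ((l : ℝ) * δ) = 1)).max' hT with hkdef
  have hkmem := Finset.max'_mem _ hT
  rw [Finset.mem_filter] at hkmem
  obtain ⟨hkmem', hbk⟩ := hkmem
  have hkN : k ≤ N := Nat.lt_succ_iff.1 (Finset.mem_range.1 hkmem')
  have hkmax : ∀ l ∈ Finset.range (N + 1), btil ((l : ℝ) * δ) = 1 → l ≤ k := by
    intro l hl hbl
    exact Finset.le_max' _ l (Finset.mem_filter.2 ⟨hl, hbl⟩)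
  have hbk1 : btil (((k + 1 : ℕ) : ℝ) * δ) = 0 := by
    rcases Nat.lt_or_ge k N with hkn | hkn
    · rcases hb' (k + 1) (Finset.mem_range.2 (by omega)) with h | h
      · exact h
      · exfalso
        have := hkmax (k + 1) (Finset.mem_range.2 (by omega)) h
        omega
    · have : k = N := le_antisymm hkN hkn
      rw [this]
      exact hbN1
  -- at k there is a down jump
  have hjump : Δp ((k : ℝ) * δ) = 1 ∧ Δm ((k : ℝ) * δ) = 0 := by
    have h := hstep k hkN
    rw [hbk1, hbk] at h
    rcases hm' k hkmem' with h1 | h1 <;> rcases hp' k hkmem' with h2 | h2 <;>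
      exact ⟨by linarith, by linarith⟩
  -- telescoping
  have htel : ∑ l ∈ Finset.range (N + 1), Δm ((l : ℝ) * δ) -
      ∑ l ∈ Finset.range (N + 1), Δp ((l : ℝ) * δ) = - btil (((0 : ℕ) : ℝ) * δ) := by
    have h := hformula (N + 1) le_rfl
    rw [hbN1, Finset.sum_sub_distrib] at h
    linarith
  have hbudget : ∑ l ∈ Finset.range (N + 1), Δm ((l : ℝ) * δ) +
      ∑ l ∈ Finset.range (N + 1), Δp ((l : ℝ) * δ) ≤ 2 := by
    rw [← Finset.sum_add_distrib]
    exact h_ii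
  have hSpk : (1 : ℝ) ≤ ∑ l ∈ Finset.range (N + 1), Δp ((l : ℝ) * δ) := by
    have h0 : Δp ((k : ℝ) * δ) ≤ ∑ l ∈ Finset.range (N + 1), Δp ((l : ℝ) * δ) :=
      Finset.single_le_sum (f := fun l : ℕ => Δp ((l : ℝ) * δ))
        (fun i hi => by rcases hp' i hi with h | h <;> simp [h]) hkmem'
    rw [hjump.1] at h0
    exact h0
  -- shared final step
  have key : ∀ a : ℕ,
      (∀ l : ℕ, l ≤ N → (btil ((l : ℝ) * δ) = 1 ↔ a ≤ l ∧ l ≤ k)) →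
      xm ≥ (a : ℝ) * δ → xp ≤ (k : ℝ) * δ → xp - xm ≥ (k : ℝ) * δ - (a : ℝ) * δ →
      ∀ t ∈ G, (btil t = 1 ↔ xm ≤ t ∧ t ≤ xp) := by
    intro a hbval hxm hxp hdiff t ht
    obtain ⟨l, hlN, rfl⟩ := hmemG' t ht
    have hxm' : xm = (a : ℝ) * δ := by linarith
    have hxp' : xp = (k : ℝ) * δ := by linarith
    rw [hbval l hlN, hxm', hxp']
    constructor
    · rintro ⟨h1, h2⟩
      constructor
      · exact mul_le_mul_of_nonneg_right (by exact_mod_cast h1) hδ.le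
      · exact mul_le_mul_of_nonneg_right (by exact_mod_cast h2) hδ.le
    · rintro ⟨h1, h2⟩
      constructor
      · exact_mod_cast le_of_mul_le_mul_right h1 hδ
      · exact_mod_cast le_of_mul_le_mul_right h2 hδ
  -- case split on the value at 0
  rcases hb' 0 (Finset.mem_range.2 (by omega)) with hb0 | hb0
  · -- btil 0 = 0 : one up jump at j, one down jump at k
    have hSmSp : ∑ l ∈ Finset.range (N + 1), Δm ((l : ℝ) * δ) =
        ∑ l ∈ Finset.range (N + 1), Δp ((l : ℝ) * δ) := by
      rw [hb0] at htel; linarith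
    have hSplt : ∑ l ∈ Finset.range (N + 1), Δp ((l : ℝ) * δ) < 2 := by linarith
    have hSmlt : ∑ l ∈ Finset.range (N + 1), Δm ((l : ℝ) * δ) < 2 := by linarith
    have hponly := aux_support hp' hSplt hkmem' hjump.1
    have hSp : ∑ l ∈ Finset.range (N + 1), Δp ((l : ℝ) * δ) = 1 := by
      rw [Finset.sum_eq_single_of_mem k hkmem' hponly, hjump.1]
    obtain ⟨j, hjmem, hmj⟩ := aux_exists hm' (by rw [hSmSp, hSp]; norm_num)
    have hmonly := aux_support hm' hSmlt hjmem hmj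
    have hjN : j ≤ N := Nat.lt_succ_iff.1 (Finset.mem_range.1 hjmem)
    -- partial sums of p
    have hpsum : ∀ l : ℕ, l ≤ N + 1 → ∑ i ∈ Finset.range l, Δp ((i : ℝ) * δ) =
        if k < l then 1 else 0 := by
      intro l hl
      by_cases hkl : k < l
      · rw [if_pos hkl]
        rw [Finset.sum_eq_single_of_mem k (Finset.mem_range.2 hkl)
          (fun i hi hik => hponly i (Finset.mem_range.2 (by
            have := Finset.mem_range.1 hi; omega)) hik), hjump.1]
      · rw [if_neg hkl]
        apply Finset.sum_eq_zero
        intro i hi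
        have hi' := Finset.mem_range.1 hi
        exact hponly i (Finset.mem_range.2 (by omega)) (by omega)
    have hmsum : ∀ l : ℕ, l ≤ N + 1 → ∑ i ∈ Finset.range l, Δm ((i : ℝ) * δ) =
        if j < l then 1 else 0 := by
      intro l hl
      by_cases hjl : j < l
      · rw [if_pos hjl]
        rw [Finset.sum_eq_single_of_mem j (Finset.mem_range.2 hjl)
          (fun i hi hij => hmonly i (Finset.mem_range.2 (by
            have := Finset.mem_range.1 hi; omega)) hij), hmj]
      · rw [if_neg hjl]
        apply Finset.sum_eq_zero
        intro i hi
        have hi' := Finset.mem_range.1 hi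
        exact hmonly i (Finset.mem_range.2 (by omega)) (by omega)
    -- j < k
    have hjk : j < k := by
      by_contra hjk
      push_neg at hjk
      have hf := hformula k (by omega)
      rw [hb0, Finset.sum_sub_distrib, hpsum k (by omega), hmsum k (by omega)] at hf
      rw [if_neg (lt_irrefl k), if_neg (by omega : ¬ j < k)] at hf
      rw [hbk] at hf
      norm_num at hf
    -- b values
    have hbval : ∀ l : ℕ, l ≤ N → (btil ((l : ℝ) * δ) = 1 ↔ j + 1 ≤ l ∧ l ≤ k) := by
      intro l hlN
      have hf := hformula l (by omega)
      rw [hb0, Finset.sum_sub_distrib, hpsum l (by omega), hmsum l (by omega)] at hf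
      by_cases h1 : j < l
      · by_cases h2 : l ≤ k
        · rw [if_pos h1, if_neg (by omega : ¬ k < l)] at hf
          constructor
          · intro _; omega
          · intro _; rw [hf]; ring
        · rw [if_pos h1, if_pos (by omega : k < l)] at hf
          constructor
          · intro hb; rw [hf] at hb; norm_num at hb
          · intro h; omega
      · rw [if_neg h1, if_neg (by omega : ¬ k < l)] at hf
        constructor
        · intro hb; rw [hf] at hb; norm_num at hb
        · intro h; omega
    -- the three constraint sums
    have hA : ∑ l ∈ Finset.range (N + 1), ((l : ℝ) * δ + δ) * Δm ((l : ℝ) * δ) =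
        (j : ℝ) * δ + δ := by
      rw [Finset.sum_eq_single_of_mem j hjmem
        (fun i hi hij => by rw [hmonly i hi hij, mul_zero]), hmj, mul_one]
    have hB : ∑ l ∈ Finset.range (N + 1), ((N : ℝ) * δ - (l : ℝ) * δ) * Δp ((l : ℝ) * δ) =
        (N : ℝ) * δ - (k : ℝ) * δ := by
      rw [Finset.sum_eq_single_of_mem k hkmem'
        (fun i hi hik => by rw [hponly i hi hik, mul_zero]), hjump.1, mul_one]
    have hC : ∑ l ∈ Finset.range (N + 1),
        (((N : ℝ) * δ - (l : ℝ) * δ) * Δp ((l : ℝ) * δ) +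
          ((l : ℝ) * δ + δ) * Δm ((l : ℝ) * δ)) =
        ((N : ℝ) * δ - (k : ℝ) * δ) + ((j : ℝ) * δ + δ) := by
      rw [Finset.sum_add_distrib, hA, hB]
    apply key (j + 1) (by intro l hl; exact hbval l hl)
    · rw [hA] at h_iii
      push_cast
      linarith
    · rw [hB] at h_iv
      linarith
    · rw [hC, hSp] at h_v
      push_cast
      linarith
  · -- btil 0 = 1 : no up jump, one down jump at k
    have hSmSp : ∑ l ∈ Finset.range (N + 1), Δm ((l : ℝ) * δ) =
        ∑ l ∈ Finset.range (N + 1), Δp ((l : ℝ) * δ) - 1 := by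
      rw [hb0] at htel; linarith
    have hSplt : ∑ l ∈ Finset.range (N + 1), Δp ((l : ℝ) * δ) < 2 := by linarith
    have hponly := aux_support hp' hSplt hkmem' hjump.1
    have hSp : ∑ l ∈ Finset.range (N + 1), Δp ((l : ℝ) * δ) = 1 := by
      rw [Finset.sum_eq_single_of_mem k hkmem' hponly, hjump.1]
    have hmzero : ∀ i ∈ Finset.range (N + 1), Δm ((i : ℝ) * δ) = 0 := by
      intro i hi
      rcases hm' i hi with h | h
      · exact h
      · exfalso
        have h1 : Δm ((i : ℝ) * δ) ≤ ∑ l ∈ Finset.range (N + 1), Δm ((l : ℝ) * δ) :=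
          Finset.single_le_sum (f := fun l : ℕ => Δm ((l : ℝ) * δ))
            (fun i' hi' => by rcases hm' i' hi' with h' | h' <;> simp [h']) hi
        rw [h] at h1
        rw [hSp] at hSmSp
        linarith
    have hpsum : ∀ l : ℕ, l ≤ N + 1 → ∑ i ∈ Finset.range l, Δp ((i : ℝ) * δ) =
        if k < l then 1 else 0 := by
      intro l hl
      by_cases hkl : k < l
      · rw [if_pos hkl]
        rw [Finset.sum_eq_single_of_mem k (Finset.mem_range.2 hkl)
          (fun i hi hik => hponly i (Finset.mem_range.2 (by
            have := Finset.mem_range.1 hi; omega)) hik), hjump.1]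
      · rw [if_neg hkl]
        apply Finset.sum_eq_zero
        intro i hi
        have hi' := Finset.mem_range.1 hi
        exact hponly i (Finset.mem_range.2 (by omega)) (by omega)
    have hmsum : ∀ l : ℕ, l ≤ N + 1 → ∑ i ∈ Finset.range l, Δm ((i : ℝ) * δ) = 0 := by
      intro l hl
      apply Finset.sum_eq_zero
      intro i hi
      have hi' := Finset.mem_range.1 hi
      exact hmzero i (Finset.mem_range.2 (by omega))
    have hbval : ∀ l : ℕ, l ≤ N → (btil ((l : ℝ) * δ) = 1 ↔ 0 ≤ l ∧ l ≤ k) := by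
      intro l hlN
      have hf := hformula l (by omega)
      rw [hb0, Finset.sum_sub_distrib, hpsum l (by omega), hmsum l (by omega)] at hf
      by_cases h2 : l ≤ k
      · rw [if_neg (by omega : ¬ k < l)] at hf
        constructor
        · intro _; omega
        · intro _; rw [hf]; ring
      · rw [if_pos (by omega : k < l)] at hf
        constructor
        · intro hb; rw [hf] at hb; norm_num at hb
        · intro h; omega
    have hA : ∑ l ∈ Finset.range (N + 1), ((l : ℝ) * δ + δ) * Δm ((l : ℝ) * δ) = 0 := by
      apply Finset.sum_eq_zero
      intro i hi
      rw [hmzero i hi, mul_zero]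
    have hB : ∑ l ∈ Finset.range (N + 1), ((N : ℝ) * δ - (l : ℝ) * δ) * Δp ((l : ℝ) * δ) =
        (N : ℝ) * δ - (k : ℝ) * δ := by
      rw [Finset.sum_eq_single_of_mem k hkmem'
        (fun i hi hik => by rw [hponly i hi hik, mul_zero]), hjump.1, mul_one]
    have hC : ∑ l ∈ Finset.range (N + 1),
        (((N : ℝ) * δ - (l : ℝ) * δ) * Δp ((l : ℝ) * δ) +
          ((l : ℝ) * δ + δ) * Δm ((l : ℝ) * δ)) =
        (N : ℝ) * δ - (k : ℝ) * δ := by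
      rw [Finset.sum_add_distrib, hA, hB]
      ring
    apply key 0 (by intro l hl; exact hbval l hl)
    · rw [hA] at h_iii
      push_cast
      linarith
    · rw [hB] at h_iv
      linarith
    · rw [hC, hSp] at h_v
      push_cast
      linarith
end

section
/- Let m be a positive integer, M > 0, and μ ∈ ℝ^m with 0 ≤ μ_j ≤ M/2 for every j; set μ_min := min_j μ_j. Let Σ be a real symmetric m×m matrix, ε_μ ∈ ℝ, Y₁ a PSD real symmetric (m+1)×(m+1) matrix, and Y₂ a PSD real symmetric m×m matrix. Define p_Y(t) := ⟨B(t), Y₁⟩_F + ⟨(t−μ)(t−μ)ᵀ, Y₂⟩_F. Then p_Y is Lipschitz continuous on [0,M]^m with Lipschitz constant L = 2·Tr(Y₁) + 2·√m·(M − μ_min)·Tr(Y₂); that is, |p_Y(t) − p_Y(t′)| ≤ L·‖t − t′‖₂ for all t, t′ ∈ [0,M]^m. -/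
/-!
The pairing with `B(t)` sees `t` only through the last row and column, so
`p_Y(t) - p_Y(t')` is `xᵀY₁u + uᵀY₁x` with `x = (t - t', 0)` and `u` the last basis vector, plus
`(t - t')ᵀY₂(t - μ) + (t' - μ)ᵀY₂(t - t')`. For PSD `Y = AᵀA` one has
`|aᵀYb| = |∑ₖ ⟪Aₖ, a⟫⟪Aₖ, b⟫| ≤ (∑ₖ ‖Aₖ‖²) ‖a‖‖b‖ = Tr(Y) ‖a‖‖b‖` by Cauchy–Schwarz row by row,
and on the box `|t_j - μ_j| ≤ M - μ_min` because `μ_j ≤ M/2 ≤ M - μ_j`,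
so `‖t - μ‖ ≤ √m (M - μ_min)`.
-/

open Matrix

open WithLp

theorem Matrix.trace_transpose_vecMulVec_mul {R n : Type*} [Fintype n] [CommSemiring R]
    (a b : n → R) (Y : Matrix n n R) : ((vecMulVec a b)ᵀ * Y).trace = a ⬝ᵥ Y *ᵥ b := by
  rw [transpose_vecMulVec, vecMulVec_mul, trace_vecMulVec, dotProduct_comm, dotProduct_mulVec]

theorem Matrix.dotProduct_mulVec_sub_dotProduct_mulVec {R n : Type*} [Fintype n] [CommRing R]
    (Y : Matrix n n R) (a b : n → R) :
    a ⬝ᵥ Y *ᵥ a - b ⬝ᵥ Y *ᵥ b = (a - b) ⬝ᵥ Y *ᵥ a + b ⬝ᵥ Y *ᵥ (a - b) := by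
  simp only [sub_dotProduct, mulVec_sub, dotProduct_sub]
  ring

theorem EuclideanSpace.norm_toLp_le_sqrt_card_mul {ι : Type*} [Fintype ι] {x : ι → ℝ} {c : ℝ}
    (hx : ∀ i, |x i| ≤ c) : ‖toLp 2 x‖ ≤ √(Fintype.card ι) * c := by
  obtain hc | hc := le_or_gt 0 c
  · rw [EuclideanSpace.norm_eq, ← Real.sqrt_sq hc, ← Real.sqrt_mul (Nat.cast_nonneg _)]
    gcongr
    calc ∑ i, ‖(toLp 2 x) i‖ ^ 2 ≤ ∑ _i : ι, c ^ 2 :=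
          Finset.sum_le_sum fun i _ => by simpa using pow_le_pow_left₀ (abs_nonneg _) (hx i) 2
      _ = Fintype.card ι * c ^ 2 := by simp
  · have : IsEmpty ι := ⟨fun i => ((abs_nonneg _).trans (hx i)).not_gt hc⟩
    simp [Subsingleton.elim (toLp 2 x) 0]

theorem EuclideanSpace.norm_toLp_snoc_zero {m : ℕ} (x : Fin m → ℝ) :
    ‖toLp 2 (Fin.snoc x 0 : Fin (m + 1) → ℝ)‖ = ‖toLp 2 x‖ := by
  simp [EuclideanSpace.norm_eq, Fin.sum_univ_castSucc]

open scoped MatrixOrder in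
theorem Matrix.PosSemidef.abs_dotProduct_mulVec_le {n : Type*} [Fintype n] {Y : Matrix n n ℝ}
    (hY : Y.PosSemidef) (a b : n → ℝ) :
    |a ⬝ᵥ Y *ᵥ b| ≤ Y.trace * ‖toLp 2 a‖ * ‖toLp 2 b‖ := by
  classical
  obtain ⟨A, rfl⟩ := CStarAlgebra.nonneg_iff_eq_star_mul_self.mp hY.nonneg
  set r : n → EuclideanSpace ℝ n := fun k => toLp 2 (A k)
  have hdot : a ⬝ᵥ (star A * A) *ᵥ b =
      ∑ k, inner ℝ (r k) (toLp 2 a) * inner ℝ (r k) (toLp 2 b) := by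
    simp only [r, EuclideanSpace.inner_eq_star_dotProduct, star_trivial]
    rw [← mulVec_mulVec, dotProduct_mulVec, star_eq_conjTranspose,
      conjTranspose_eq_transpose_of_trivial, vecMul_transpose]
    simp [dotProduct, mulVec, Finset.mul_sum, mul_comm, mul_left_comm]
  have htr : (star A * A).trace = ∑ k, ‖r k‖ ^ 2 := by
    rw [Finset.sum_congr rfl fun k _ => EuclideanSpace.real_norm_sq_eq (r k)]
    simp only [r, trace, diag_apply, mul_apply, star_apply, star_trivial, sq]
    exact Finset.sum_comm
  rw [hdot, htr, Finset.sum_mul, Finset.sum_mul]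
  refine (Finset.abs_sum_le_sum_abs _ _).trans (Finset.sum_le_sum fun k _ => ?_)
  calc |inner ℝ (r k) (toLp 2 a) * inner ℝ (r k) (toLp 2 b)|
      ≤ (‖r k‖ * ‖toLp 2 a‖) * (‖r k‖ * ‖toLp 2 b‖) := by
        rw [abs_mul]
        exact mul_le_mul (abs_real_inner_le_norm _ _) (abs_real_inner_le_norm _ _)
          (abs_nonneg _) (by positivity)
    _ = ‖r k‖ ^ 2 * ‖toLp 2 a‖ * ‖toLp 2 b‖ := by ring

theorem Matrix.PosSemidef.abs_trace_vecMulVec_sub_le {n : Type*} [Fintype n] {Y : Matrix n n ℝ}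
    (hY : Y.PosSemidef) (a b : n → ℝ) :
    |((vecMulVec a a)ᵀ * Y).trace - ((vecMulVec b b)ᵀ * Y).trace| ≤
      Y.trace * (‖toLp 2 a‖ + ‖toLp 2 b‖) * ‖toLp 2 (a - b)‖ := by
  rw [trace_transpose_vecMulVec_mul, trace_transpose_vecMulVec_mul,
    dotProduct_mulVec_sub_dotProduct_mulVec]
  calc _ ≤ |(a - b) ⬝ᵥ Y *ᵥ a| + |b ⬝ᵥ Y *ᵥ (a - b)| := abs_add_le _ _
    _ ≤ Y.trace * ‖toLp 2 (a - b)‖ * ‖toLp 2 a‖ + Y.trace * ‖toLp 2 b‖ * ‖toLp 2 (a - b)‖ :=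
        add_le_add (hY.abs_dotProduct_mulVec_le _ _) (hY.abs_dotProduct_mulVec_le _ _)
    _ = _ := by ring

theorem Bmat_sub_Bmat {m : ℕ} (S : Matrix (Fin m) (Fin m) ℝ) (v w : Fin m → ℝ) (e : ℝ) :
    Bmat m S v e - Bmat m S w e =
      vecMulVec (Fin.snoc (v - w) 0) (Pi.single (Fin.last m) 1)
        + vecMulVec (Pi.single (Fin.last m) 1) (Fin.snoc (v - w) 0) := by
  ext i j
  induction i using Fin.lastCases <;> induction j using Fin.lastCases <;>
    simp [Bmat, vecMulVec_apply]

theorem abs_trace_Bmat_sub_le {m : ℕ} {Y : Matrix (Fin (m + 1)) (Fin (m + 1)) ℝ}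
    (hY : Y.PosSemidef) (S : Matrix (Fin m) (Fin m) ℝ) (v w : Fin m → ℝ) (e : ℝ) :
    |((Bmat m S v e)ᵀ * Y).trace - ((Bmat m S w e)ᵀ * Y).trace| ≤
      2 * Y.trace * ‖toLp 2 (v - w)‖ := by
  set x : Fin (m + 1) → ℝ := Fin.snoc (v - w) 0
  set u : Fin (m + 1) → ℝ := Pi.single (Fin.last m) 1
  have hu : ‖toLp 2 u‖ = 1 := by simp [u]
  rw [← trace_sub, ← sub_mul, ← transpose_sub, Bmat_sub_Bmat, transpose_add, add_mul, trace_add,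
    trace_transpose_vecMulVec_mul, trace_transpose_vecMulVec_mul]
  calc _ ≤ |x ⬝ᵥ Y *ᵥ u| + |u ⬝ᵥ Y *ᵥ x| := abs_add_le _ _
    _ ≤ Y.trace * ‖toLp 2 x‖ * ‖toLp 2 u‖ + Y.trace * ‖toLp 2 u‖ * ‖toLp 2 x‖ :=
        add_le_add (hY.abs_dotProduct_mulVec_le _ _) (hY.abs_dotProduct_mulVec_le _ _)
    _ = _ := by rw [hu, EuclideanSpace.norm_toLp_snoc_zero]; ring

theorem lipschitz_constant_of_pY_general
    {m : ℕ} (M : ℝ)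
    (μ : Fin m → ℝ) (hμ : ∀ j, 0 ≤ μ j ∧ μ j ≤ M / 2)
    (μmin : ℝ) (hμmin_le : ∀ j, μmin ≤ μ j)
    (Sig : Matrix (Fin m) (Fin m) ℝ) (εμ : ℝ)
    (Y₁ : Matrix (Fin (m + 1)) (Fin (m + 1)) ℝ) (hY₁ : Y₁.PosSemidef)
    (Y₂ : Matrix (Fin m) (Fin m) ℝ) (hY₂ : Y₂.PosSemidef)
    (p : EuclideanSpace ℝ (Fin m) → ℝ)
    (hp : ∀ t, p t =
      ((Bmat m Sig (fun l => t l - μ l) εμ)ᵀ * Y₁).trace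
        + ((Matrix.vecMulVec (fun l => t l - μ l) (fun l => t l - μ l))ᵀ * Y₂).trace) :
    ∀ t t' : EuclideanSpace ℝ (Fin m),
      (∀ j, t j ∈ Set.Icc (0 : ℝ) M) → (∀ j, t' j ∈ Set.Icc (0 : ℝ) M) →
      |p t - p t'| ≤
        (2 * Y₁.trace + 2 * Real.sqrt m * (M - μmin) * Y₂.trace) * ‖t - t'‖ := by
  intro t t' ht ht'
  have hbox : ∀ s : EuclideanSpace ℝ (Fin m), (∀ j, s j ∈ Set.Icc 0 M) →
      ‖toLp 2 (fun l => s l - μ l)‖ ≤ √m * (M - μmin) := fun s hs => by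
    simpa using EuclideanSpace.norm_toLp_le_sqrt_card_mul (x := fun l => s l - μ l)
      (c := M - μmin) fun j => abs_le.mpr
        ⟨by linarith [(hs j).1, (hμ j).2, hμmin_le j], by linarith [(hs j).2, hμmin_le j]⟩
  have hdiff : ((fun l => t l - μ l) - fun l => t' l - μ l) = (t - t').ofLp := by
    ext l; simp
  have hlin := abs_trace_Bmat_sub_le hY₁ Sig (fun l => t l - μ l) (fun l => t' l - μ l) εμ
  have hquad := hY₂.abs_trace_vecMulVec_sub_le (fun l => t l - μ l) (fun l => t' l - μ l)
  rw [hdiff, toLp_ofLp] at hlin hquad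
  have hsum : ‖toLp 2 (fun l => t l - μ l)‖ + ‖toLp 2 (fun l => t' l - μ l)‖ ≤
      2 * (√m * (M - μmin)) := by
    linarith [hbox t ht, hbox t' ht']
  rw [hp, hp, add_sub_add_comm]
  calc _ ≤ _ := abs_add_le _ _
    _ ≤ 2 * Y₁.trace * ‖t - t'‖ + Y₂.trace * (2 * (√m * (M - μmin))) * ‖t - t'‖ :=
        add_le_add hlin (hquad.trans (by gcongr; exact hY₂.trace_nonneg))
    _ = _ := by ring

/-- explicit Lipschitz constant `L = 2·Tr(Y₁) + 2·√m·(M − μ_min)·Tr(Y₂)` for the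
polynomial part `p_Y(t) = ⟨B(t), Y₁⟩_F + ⟨(t−μ)(t−μ)ᵀ, Y₂⟩_F` on the box `[0, M]^m`. -/
theorem lipschitz_constant_of_pY
    {m : ℕ} (hm : 0 < m) (M : ℝ) (hM : 0 < M)
    (μ : Fin m → ℝ) (hμ : ∀ j, 0 ≤ μ j ∧ μ j ≤ M / 2)
    (μmin : ℝ) (hμmin_le : ∀ j, μmin ≤ μ j) (hμmin_mem : ∃ j, μ j = μmin)
    (Sig : Matrix (Fin m) (Fin m) ℝ) (hSig : Sig.IsSymm) (εμ : ℝ)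
    (Y₁ : Matrix (Fin (m + 1)) (Fin (m + 1)) ℝ) (hY₁ : Y₁.PosSemidef)
    (Y₂ : Matrix (Fin m) (Fin m) ℝ) (hY₂ : Y₂.PosSemidef)
    (p : EuclideanSpace ℝ (Fin m) → ℝ)
    (hp : ∀ t, p t =
      ((Bmat m Sig (fun l => t l - μ l) εμ)ᵀ * Y₁).trace
        + ((Matrix.vecMulVec (fun l => t l - μ l) (fun l => t l - μ l))ᵀ * Y₂).trace) :
    ∀ t t' : EuclideanSpace ℝ (Fin m),
      (∀ j, t j ∈ Set.Icc (0 : ℝ) M) → (∀ j, t' j ∈ Set.Icc (0 : ℝ) M) →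
      |p t - p t'| ≤
        (2 * Y₁.trace + 2 * Real.sqrt m * (M - μmin) * Y₂.trace) * ‖t - t'‖ :=
  lipschitz_constant_of_pY_general M μ hμ μmin hμmin_le Sig εμ Y₁ hY₁ Y₂ hY₂ p hp
end

section
/- Let v ∈ ℝ^m, let B be the real symmetric (m+1)×(m+1) block matrix [[0_{m×m}, v],[vᵀ, 0]], and let Y be a PSD real symmetric (m+1)×(m+1) matrix. Then ⟨B, Y⟩_F ≤ √2·‖v‖₂·Tr(Y). -/
/-
Only the last row and column of `Y` meet `B`, so `⟨B, Y⟩ = 2 ∑ᵢ vᵢ Y_{i,m+1}`. The `2 × 2` principal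
minors of `Y` are nonnegative, so `Y_{i,m+1}² ≤ Y_{ii} Y_{m+1,m+1}`; Cauchy–Schwarz and AM–GM then
give `⟨B, Y⟩ ≤ ‖v‖ (∑_{i ≤ m} Y_{ii} + Y_{m+1,m+1}) = ‖v‖ Tr Y`, which is sharper than the claim.
-/

open Matrix

section Bmat

variable {m : ℕ} (S : Matrix (Fin m) (Fin m) ℝ) (v : Fin m → ℝ) (e : ℝ)

@[simp]
lemma Bmat_castSucc_castSucc (i j : Fin m) : Bmat m S v e i.castSucc j.castSucc = S i j := by
  simp [Bmat]

@[simp]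
lemma Bmat_castSucc_last (i : Fin m) : Bmat m S v e i.castSucc (Fin.last m) = v i := by
  simp [Bmat]

@[simp]
lemma Bmat_last_castSucc (j : Fin m) : Bmat m S v e (Fin.last m) j.castSucc = v j := by
  simp [Bmat]

@[simp]
lemma Bmat_last_last : Bmat m S v e (Fin.last m) (Fin.last m) = e := by
  simp [Bmat]

lemma trace_transpose_Bmat_mul (Y : Matrix (Fin (m + 1)) (Fin (m + 1)) ℝ) :
    ((Bmat m S v e)ᵀ * Y).trace =
      ∑ i, ∑ j, S i j * Y i.castSucc j.castSucc +
        ∑ i, v i * (Y i.castSucc (Fin.last m) + Y (Fin.last m) i.castSucc) +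
        e * Y (Fin.last m) (Fin.last m) := by
  simp only [trace, diag_apply, mul_apply, transpose_apply, Fin.sum_univ_castSucc,
    Bmat_castSucc_castSucc, Bmat_castSucc_last, Bmat_last_castSucc, Bmat_last_last,
    Finset.sum_add_distrib, mul_add]
  rw [Finset.sum_comm]
  ring

end Bmat

open scoped ComplexOrder in
lemma Matrix.PosSemidef.apply_mul_apply_le {n 𝕜 : Type*} [Fintype n] [RCLike 𝕜]
    {Y : Matrix n n 𝕜} (hY : Y.PosSemidef) (i j : n) : Y i j * Y j i ≤ Y i i * Y j j := by
  have h := (hY.submatrix ![i, j]).det_nonneg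
  rw [det_fin_two] at h
  simpa [sub_nonneg] using h

lemma Matrix.PosSemidef.apply_sq_le {n : Type*} [Fintype n] {Y : Matrix n n ℝ}
    (hY : Y.PosSemidef) (i j : n) : Y i j ^ 2 ≤ Y i i * Y j j := by
  have h : Y i j * Y j i ≤ Y i i * Y j j := hY.apply_mul_apply_le i j
  have hji : Y j i = Y i j := hY.isHermitian.apply i j
  rwa [hji, ← sq] at h

lemma Real.sqrt_mul_le_half_add {a c : ℝ} (ha : 0 ≤ a) (hc : 0 ≤ c) :
    √(a * c) ≤ (a + c) / 2 :=
  Real.sqrt_le_iff.2 ⟨by positivity, by nlinarith [sq_nonneg (a - c)]⟩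

lemma Matrix.PosSemidef.two_mul_sum_mul_apply_last_le {m : ℕ}
    {Y : Matrix (Fin (m + 1)) (Fin (m + 1)) ℝ} (hY : Y.PosSemidef) (v : Fin m → ℝ) :
    2 * ∑ i, v i * Y i.castSucc (Fin.last m) ≤ √(∑ i, v i ^ 2) * Y.trace := by
  set a := ∑ i : Fin m, Y i.castSucc i.castSucc
  set c := Y (Fin.last m) (Fin.last m)
  have htrace : Y.trace = a + c := Fin.sum_univ_castSucc _
  have hcol : ∑ i : Fin m, Y i.castSucc (Fin.last m) ^ 2 ≤ a * c := by
    rw [Finset.sum_mul]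
    gcongr with i
    exact hY.apply_sq_le _ _
  have ha : 0 ≤ a := Finset.sum_nonneg fun i _ ↦ hY.diag_nonneg
  have hc : 0 ≤ c := hY.diag_nonneg
  calc 2 * ∑ i, v i * Y i.castSucc (Fin.last m)
      ≤ 2 * (√(∑ i, v i ^ 2) * √(∑ i : Fin m, Y i.castSucc (Fin.last m) ^ 2)) := by
        gcongr; exact Real.sum_mul_le_sqrt_mul_sqrt _ _ _
    _ ≤ 2 * (√(∑ i, v i ^ 2) * √(a * c)) := by gcongr
    _ ≤ 2 * (√(∑ i, v i ^ 2) * ((a + c) / 2)) := by gcongr; exact Real.sqrt_mul_le_half_add ha hc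
    _ = √(∑ i, v i ^ 2) * Y.trace := by rw [htrace]; ring

/-- for the symmetric block matrix `B = [[0, v],[vᵀ, 0]]` and a PSD matrix `Y`,
`⟨B, Y⟩_F ≤ √2 · ‖v‖₂ · Tr(Y)`. -/
theorem frobenius_offdiag_block_le
    {m : ℕ} (v : Fin m → ℝ)
    (Y : Matrix (Fin (m + 1)) (Fin (m + 1)) ℝ) (hY : Y.PosSemidef) :
    ((Bmat m 0 v 0)ᵀ * Y).trace ≤
      Real.sqrt 2 * Real.sqrt (∑ i, v i ^ 2) * Y.trace := by
  have hsymm : ∀ i j, Y j i = Y i j := fun i j ↦ hY.isHermitian.apply i j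
  have hrhs : 0 ≤ √(∑ i, v i ^ 2) * Y.trace := mul_nonneg (Real.sqrt_nonneg _) hY.trace_nonneg
  calc ((Bmat m 0 v 0)ᵀ * Y).trace = 2 * ∑ i, v i * Y i.castSucc (Fin.last m) := by
        simp only [trace_transpose_Bmat_mul, hsymm (Fin.last m), Matrix.zero_apply, zero_mul,
          Finset.sum_const_zero, Finset.mul_sum]
        ring_nf
    _ ≤ √(∑ i, v i ^ 2) * Y.trace := hY.two_mul_sum_mul_apply_last_le v
    _ ≤ √2 * √(∑ i, v i ^ 2) * Y.trace := by
        rw [mul_assoc]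
        exact le_mul_of_one_le_left hrhs (Real.one_le_sqrt.2 one_le_two)
end

section
/- Let T ⊆ ℝ^m be compact and P a finite nonnegative Borel measure on T. Let μ ∈ ℝ^m, Σ a real symmetric m×m matrix, ε_μ, ε_Σ ∈ ℝ, I a finite index set, ε ∈ ℝ^I, and let h : T → ℝ and gᵢ : T → ℝ (i ∈ I) be continuous. Assume P is primal feasible: the matrix ∫_T B(t) dP(t) is PSD, the matrix ε_Σ·Σ − ∫_T (t−μ)(t−μ)ᵀ dP(t) is PSD, and ∫_T gᵢ dP ≥ εᵢ for every i ∈ I. Assume (y, Y₁, Y₂) is dual feasible: y ∈ ℝ^I with yᵢ ≥ 0, Y₁ a PSD real symmetric (m+1)×(m+1) matrix, Y₂ a PSD real symmetric m×m matrix, and for every t ∈ T, h(t) − ⟨B(t), Y₁⟩_F + ⟨(t−μ)(t−μ)ᵀ, Y₂⟩_F − Σ_{i∈I} gᵢ(t)·yᵢ ≥ 0. Then ∫_T h dP ≥ Σ_{i∈I} εᵢ·yᵢ − ε_Σ·⟨Σ, Y₂⟩_F. -/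
/-!
Integrate the dual constraint over `T` against `P`. The Frobenius pairings commute with the
entrywise integral, so they become `⟨∫ B dP, Y₁⟩` and `⟨∫ (t - μ)(t - μ)ᵀ dP, Y₂⟩`. Since the
trace of a product of two PSD matrices is nonnegative, primal feasibility makes the first
pairing nonnegative and bounds the second by `ε_Σ ⟨Σ, Y₂⟩`, while `∫ gᵢ dP ≥ εᵢ` and `yᵢ ≥ 0`
bound the constraint term.
-/

open Matrix MeasureTheory

namespace Matrix

variable {n : Type*} [Fintype n]

open scoped MatrixOrder ComplexOrder in
theorem PosSemidef.trace_mul_nonneg {𝕜 : Type*} [RCLike 𝕜] {A B : Matrix n n 𝕜}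
    (hA : A.PosSemidef) (hB : B.PosSemidef) : 0 ≤ (A * B).trace := by
  classical
  obtain ⟨X, rfl⟩ := CStarAlgebra.nonneg_iff_eq_star_mul_self.mp hB.nonneg
  rw [star_eq_conjTranspose, ← Matrix.mul_assoc, trace_mul_cycle]
  exact (hA.mul_mul_conjTranspose_same X).trace_nonneg

theorem trace_transpose_mul_le_of_posSemidef_sub {A B Y : Matrix n n ℝ}
    (hAB : (A - B).PosSemidef) (hY : Y.PosSemidef) : (Bᵀ * Y).trace ≤ (Aᵀ * Y).trace := by
  have := hAB.transpose.trace_mul_nonneg hY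
  rwa [transpose_sub, sub_mul, trace_sub, sub_nonneg] at this

end Matrix

theorem continuous_Bmat_apply (m : ℕ) (S : Matrix (Fin m) (Fin m) ℝ) (e : ℝ)
    (i j : Fin (m + 1)) : Continuous fun v => Bmat m S v e i j := by
  simp only [Bmat, of_apply]
  split_ifs <;> fun_prop

section Integral

variable {X n : Type*} [MeasurableSpace X] [Fintype n] {μ : Measure X}
  {F : X → Matrix n n ℝ}

theorem integrable_trace_transpose_mul (hF : ∀ i j, Integrable (fun x => F x i j) μ)
    (Y : Matrix n n ℝ) : Integrable (fun x => ((F x)ᵀ * Y).trace) μ := by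
  simp only [trace, diag, mul_apply, transpose_apply]
  fun_prop

theorem integral_trace_transpose_mul (hF : ∀ i j, Integrable (fun x => F x i j) μ)
    (Y : Matrix n n ℝ) :
    ∫ x, ((F x)ᵀ * Y).trace ∂μ = ((of fun i j => ∫ x, F x i j ∂μ)ᵀ * Y).trace := by
  simp only [trace, diag, mul_apply, transpose_apply, of_apply]
  rw [integral_finsetSum _ fun i _ => integrable_finsetSum _ fun j _ => (hF j i).mul_const _]
  refine Finset.sum_congr rfl fun i _ => ?_
  rw [integral_finsetSum _ fun j _ => (hF j i).mul_const _]
  simp_rw [integral_mul_const]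

end Integral

theorem weak_duality_DRO_general
    {m : ℕ} {ι : Type} [Fintype ι]
    (T : Set (EuclideanSpace ℝ (Fin m))) (hT : IsCompact T)
    (P : Measure (EuclideanSpace ℝ (Fin m))) [IsFiniteMeasure P]
    (μ : Fin m → ℝ) (Sig : Matrix (Fin m) (Fin m) ℝ)
    (εμ εSig : ℝ) (ε : ι → ℝ)
    (h : EuclideanSpace ℝ (Fin m) → ℝ) (g : ι → EuclideanSpace ℝ (Fin m) → ℝ)
    (hh : ContinuousOn h T) (hg : ∀ i, ContinuousOn (g i) T)
    (hP1 : (Matrix.of fun i j =>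
      ∫ t in T, Bmat m Sig (fun l => t l - μ l) εμ i j ∂P).PosSemidef)
    (hP2 : (εSig • Sig -
      Matrix.of fun i j => ∫ t in T, (t i - μ i) * (t j - μ j) ∂P).PosSemidef)
    (hP3 : ∀ i, ∫ t in T, g i t ∂P ≥ ε i)
    (y : ι → ℝ) (hy : ∀ i, 0 ≤ y i)
    (Y₁ : Matrix (Fin (m + 1)) (Fin (m + 1)) ℝ) (hY₁ : Y₁.PosSemidef)
    (Y₂ : Matrix (Fin m) (Fin m) ℝ) (hY₂ : Y₂.PosSemidef)
    (hdual : ∀ t ∈ T,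
      h t - ((Bmat m Sig (fun l => t l - μ l) εμ)ᵀ * Y₁).trace
        + ((Matrix.vecMulVec (fun l => t l - μ l) (fun l => t l - μ l))ᵀ * Y₂).trace
        - ∑ i, g i t * y i ≥ 0) :
    ∫ t in T, h t ∂P ≥ ∑ i, ε i * y i - εSig * (Sigᵀ * Y₂).trace := by
  have hcont : ∀ f : EuclideanSpace ℝ (Fin m) → ℝ, Continuous f → IntegrableOn f T P :=
    fun f hf => hf.continuousOn.integrableOn_compact hT
  have hv : Continuous fun (t : EuclideanSpace ℝ (Fin m)) (l : Fin m) => t l - μ l := by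
    fun_prop
  have hB : ∀ i j, IntegrableOn (fun t => Bmat m Sig (fun l => t l - μ l) εμ i j) T P :=
    fun i j => hcont _ ((continuous_Bmat_apply m Sig εμ i j).comp hv)
  have hvv : ∀ i j, IntegrableOn
      (fun t => vecMulVec (fun l => t l - μ l) (fun l => t l - μ l) i j) T P :=
    fun i j => hcont _ (by simp only [vecMulVec_apply]; fun_prop)
  have hgy : ∀ i, IntegrableOn (fun t => g i t * y i) T P :=
    fun i => ((hg i).integrableOn_compact hT).mul_const _
  have hint₀ : IntegrableOn h T P := hh.integrableOn_compact hT
  have hint₁ := integrable_trace_transpose_mul hB Y₁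
  have hint₂ := integrable_trace_transpose_mul hvv Y₂
  have hdual_int := setIntegral_nonneg (μ := P) hT.measurableSet hdual
  rw [integral_sub ?_ (integrable_finsetSum _ fun i _ => hgy i), integral_add ?_ hint₂,
    integral_sub hint₀ hint₁, integral_trace_transpose_mul hB, integral_trace_transpose_mul hvv,
    integral_finsetSum _ fun i _ => hgy i] at hdual_int
  · simp only [integral_mul_const, vecMulVec_apply] at hdual_int
    have hcov := trace_transpose_mul_le_of_posSemidef_sub hP2 hY₂
    have hmoment := hP1.transpose.trace_mul_nonneg hY₁
    have hineq : ∑ i, ε i * y i ≤ ∑ i, (∫ t in T, g i t ∂P) * y i :=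
      Finset.sum_le_sum fun i _ => mul_le_mul_of_nonneg_right (hP3 i) (hy i)
    rw [transpose_smul, smul_mul, trace_smul, smul_eq_mul] at hcov
    linarith
  · exact hint₀.sub' hint₁
  · exact (hint₀.sub' hint₁).add hint₂

/-- weak duality: if `P` is primal feasible for the moment-constrained DRO
problem and `(y, Y₁, Y₂)` is dual feasible, then
`∫_T h dP ≥ Σᵢ εᵢ·yᵢ − ε_Σ·⟨Σ, Y₂⟩_F`. -/
theorem weak_duality_DRO
    {m : ℕ} {ι : Type} [Fintype ι]
    (T : Set (EuclideanSpace ℝ (Fin m))) (hT : IsCompact T)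
    (P : Measure (EuclideanSpace ℝ (Fin m))) [IsFiniteMeasure P]
    (μ : Fin m → ℝ) (Sig : Matrix (Fin m) (Fin m) ℝ) (hSig : Sig.IsSymm)
    (εμ εSig : ℝ) (ε : ι → ℝ)
    (h : EuclideanSpace ℝ (Fin m) → ℝ) (g : ι → EuclideanSpace ℝ (Fin m) → ℝ)
    (hh : ContinuousOn h T) (hg : ∀ i, ContinuousOn (g i) T)
    (hP1 : (Matrix.of fun i j =>
      ∫ t in T, Bmat m Sig (fun l => t l - μ l) εμ i j ∂P).PosSemidef)
    (hP2 : (εSig • Sig -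
      Matrix.of fun i j => ∫ t in T, (t i - μ i) * (t j - μ j) ∂P).PosSemidef)
    (hP3 : ∀ i, ∫ t in T, g i t ∂P ≥ ε i)
    (y : ι → ℝ) (hy : ∀ i, 0 ≤ y i)
    (Y₁ : Matrix (Fin (m + 1)) (Fin (m + 1)) ℝ) (hY₁ : Y₁.PosSemidef)
    (Y₂ : Matrix (Fin m) (Fin m) ℝ) (hY₂ : Y₂.PosSemidef)
    (hdual : ∀ t ∈ T,
      h t - ((Bmat m Sig (fun l => t l - μ l) εμ)ᵀ * Y₁).trace
        + ((Matrix.vecMulVec (fun l => t l - μ l) (fun l => t l - μ l))ᵀ * Y₂).trace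
        - ∑ i, g i t * y i ≥ 0) :
    ∫ t in T, h t ∂P ≥ ∑ i, ε i * y i - εSig * (Sigᵀ * Y₂).trace :=
  weak_duality_DRO_general T hT P μ Sig εμ εSig ε h g hh hg hP1 hP2 hP3 y hy Y₁ hY₁ Y₂ hY₂ hdual
end
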